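/- arXiv:1809.10372 — 5 statements merged into one kernel-verified Lean document; each statement's English description precedes it below -/
import Mathlib

section
/- There exist a finite alphabet Σ with |Σ| = 4 and a code C ⊆ Σ^5 with |C| = 32 that is consistent with the pentagon spanoid Π₅. Consequently, f-rank(Π₅) ≥ 5/2. -/
open scoped BigOperators

/-- A spanoid on ground set `X`: a set of inference rules `(A, i)`,
read as "`A` spans `i`". -/
abbrev SpanoidOn (X : Type) : Type := Set (Set X × X)

/-- The span of `T`: the smallest superset `T'` of `T` such that whenever `(A, i)` is a
rule with `A ⊆ T'`, also `i ∈ T'`. -/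
def sSpan {X : Type} (S : SpanoidOn X) (T : Set X) : Set X :=
  ⋂₀ {T' : Set X | T ⊆ T' ∧ ∀ p ∈ S, p.1 ⊆ T' → p.2 ∈ T'}

/-- The rank of a spanoid: the minimum size of a subset spanning the whole ground set. -/
noncomputable def sRank {X : Type} [Fintype X] (S : SpanoidOn X) : ℕ :=
  sInf {k : ℕ | ∃ T : Set X, T.ncard = k ∧ sSpan S T = Set.univ}

/-- A set is closed if it equals its own span. -/
def sClosed {X : Type} (S : SpanoidOn X) (B : Set X) : Prop := sSpan S B = B

/-- A set is open if its complement is closed. -/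
def sOpen {X : Type} (S : SpanoidOn X) (B : Set X) : Prop := sClosed S Bᶜ

/-- A code `C ⊆ K^X` is consistent with the spanoid `S` if for every rule `(A, i)` of `S`
there is a function `g` with `c i = g (c|_A)` for all codewords `c ∈ C`. -/
def sConsistent {X K : Type} (S : SpanoidOn X) (C : Set (X → K)) : Prop :=
  ∀ p ∈ S, ∃ g : (↥p.1 → K) → K, ∀ c ∈ C, c p.2 = g (fun a => c a.1)

/-- The functional rank of a spanoid: the supremum of `log |C| / log |Σ|` over all finite
alphabets `Σ` (of size at least 2) and all codes `C ⊆ Σ^X` consistent with `S`. -/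
noncomputable def sFrank {X : Type} (S : SpanoidOn X) : ℝ :=
  sSup {d : ℝ | ∃ m : ℕ, 2 ≤ m ∧ ∃ C : Set (X → Fin m),
    sConsistent S C ∧ d = Real.log (Nat.card C) / Real.log m}

/-- Feasibility for the entropy linear program of a spanoid. -/
def sEntFeasible {X : Type} (S : SpanoidOn X) (f : Set X → ℝ) : Prop :=
  f ∅ = 0 ∧ (∀ i : X, f {i} ≤ 1) ∧
  (∀ A B : Set X, f (A ∪ B) + f (A ∩ B) ≤ f A + f B) ∧
  (∀ A B : Set X, A ⊆ B → f A ≤ f B) ∧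
  (∀ A : Set X, ∀ i ∈ sSpan S A, f (A ∪ {i}) = f A)

/-- The optimum of the entropy linear program: maximize `f(X)` over feasible `f`. -/
noncomputable def sLPentropy {X : Type} (S : SpanoidOn X) : ℝ :=
  sSup {y : ℝ | ∃ f : Set X → ℝ, sEntFeasible S f ∧ y = f Set.univ}

/-- The optimum of the covering linear program: minimize `∑ i, x i` over `x ≥ 0` such that
`∑_{i ∈ B} x i ≥ 1` for every nonempty open set `B`. -/
noncomputable def sLPcover {X : Type} [Fintype X] (S : SpanoidOn X) : ℝ :=
  sInf {y : ℝ | ∃ x : X → ℝ, (∀ i, 0 ≤ x i) ∧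
    (∀ B : Set X, B.Nonempty → sOpen S B → 1 ≤ ∑ i, B.indicator x i) ∧
    y = ∑ i, x i}

/-- A spanoid on `[n]` is a `q`-LCS with error-tolerance `δ` if every `i` is spanned by at
least `δ n` pairwise disjoint `q`-element subsets. -/
def sIsLCS {n : ℕ} (q : ℕ) (δ : ℝ) (S : SpanoidOn (Fin n)) : Prop :=
  ∀ i : Fin n, ∃ M : Finset (Finset (Fin n)),
    δ * n ≤ (M.card : ℝ) ∧
    (∀ A ∈ M, A.card = q) ∧
    ((M : Set (Finset (Fin n))).Pairwise fun A B => Disjoint A B) ∧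
    ∀ A ∈ M, ((A : Set (Fin n)), i) ∈ S

/-- The pentagon spanoid `Π₅` on `{0,…,4}` (indices mod 5): each element `i+3` is spanned by
the pair `{i, i+1}`. -/
def Pentagon : SpanoidOn (Fin 5) :=
  {p | ∃ i : Fin 5, p = (({i, i + 1} : Set (Fin 5)), i + 3)}

/-- The encoding `y ↦ (y_{j+4}, y_{j+2})_j` packed into `Fin 4`. -/
def pentEnc (y : Fin 5 → Fin 2) (j : Fin 5) : Fin 4 :=
  ⟨2 * (y (j + 4)).val + (y (j + 2)).val, by omega⟩

/-- The recovery function for the pentagon code's rules. -/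
def pentF (u v : Fin 4) : Fin 4 := ⟨2 * (u.val % 2) + v.val / 2, by omega⟩

lemma pentEnc_inj : Function.Injective pentEnc := by decide

lemma pentEnc_rule : ∀ (i : Fin 5) (y : Fin 5 → Fin 2),
    pentEnc y (i + 3) = pentF (pentEnc y i) (pentEnc y (i + 1)) := by decide

/-- There is a code over an alphabet of size 4 with 32 codewords consistent
with the pentagon spanoid; consequently `f-rank(Π₅) ≥ 5/2`. -/
theorem pentagon_code :
    ∃ C : Set (Fin 5 → Fin 4), Nat.card C = 32 ∧ sConsistent Pentagon C ∧
      (5 / 2 : ℝ) ≤ sFrank Pentagon := by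
  refine ⟨Set.range pentEnc, ?_, ?_, ?_⟩
  · rw [Nat.card_range_of_injective pentEnc_inj]
    simp [Nat.card_eq_fintype_card]
  · rintro p ⟨i, rfl⟩
    refine ⟨fun h => pentF (h ⟨i, Set.mem_insert _ _⟩)
      (h ⟨i + 1, Set.mem_insert_of_mem _ rfl⟩), ?_⟩
    rintro c ⟨y, rfl⟩
    exact pentEnc_rule i y
  · have hcons : sConsistent Pentagon (Set.range pentEnc) := by
      rintro p ⟨i, rfl⟩
      refine ⟨fun h => pentF (h ⟨i, Set.mem_insert _ _⟩)
        (h ⟨i + 1, Set.mem_insert_of_mem _ rfl⟩), ?_⟩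
      rintro c ⟨y, rfl⟩
      exact pentEnc_rule i y
    have hcard : Nat.card (Set.range pentEnc) = 32 := by
      rw [Nat.card_range_of_injective pentEnc_inj]
      simp [Nat.card_eq_fintype_card]
    have hmem : (5 / 2 : ℝ) ∈ {d : ℝ | ∃ m : ℕ, 2 ≤ m ∧ ∃ C : Set (Fin 5 → Fin m),
        sConsistent Pentagon C ∧ d = Real.log (Nat.card C) / Real.log m} := by
      refine ⟨4, by norm_num, Set.range pentEnc, hcons, ?_⟩
      rw [hcard]
      have h32 : (32 : ℝ) = 2 ^ (5 : ℕ) := by norm_num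
      have h4 : ((4 : ℕ) : ℝ) = 2 ^ (2 : ℕ) := by norm_num
      rw [show ((32 : ℕ) : ℝ) = 2 ^ (5 : ℕ) by norm_num, h4,
        Real.log_pow, Real.log_pow]
      have h2 : Real.log 2 ≠ 0 := ne_of_gt (Real.log_pos one_lt_two)
      field_simp
      ring
    have hbdd : BddAbove {d : ℝ | ∃ m : ℕ, 2 ≤ m ∧ ∃ C : Set (Fin 5 → Fin m),
        sConsistent Pentagon C ∧ d = Real.log (Nat.card C) / Real.log m} := by
      refine ⟨5, ?_⟩
      rintro d ⟨m, hm, C, -, rfl⟩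
      have hmpos : (1 : ℝ) < (m : ℝ) := by exact_mod_cast hm.trans_lt' one_lt_two
      have hlogm : 0 < Real.log m := Real.log_pos hmpos
      have hle : Nat.card C ≤ m ^ 5 := by
        have := Nat.card_le_card_of_injective (Subtype.val : C → (Fin 5 → Fin m))
          Subtype.val_injective
        simpa [Nat.card_eq_fintype_card] using this
      have hlog : Real.log (Nat.card C) ≤ 5 * Real.log m := by
        calc Real.log (Nat.card C) ≤ Real.log (m ^ 5) := by
              rcases Nat.eq_zero_or_pos (Nat.card C) with h0 | h0
              · simp [h0]
                positivity
              · exact Real.log_le_log (by exact_mod_cast h0) (by exact_mod_cast hle)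
          _ = 5 * Real.log m := by
              rw [show ((m : ℝ) ^ 5) = (m : ℝ) ^ (5 : ℕ) by norm_num, Real.log_pow]
              norm_num
      rw [div_le_iff₀ hlogm]
      linarith
    exact le_csSup hbdd hmem
end

section
/- For every spanoid S on a finite ground set X: f-rank(S) ≤ LP^entropy(S) ≤ rank(S). -/
open scoped BigOperators

open Finset

/-! Let `c` be uniform on a code `C` consistent with `S` over an alphabet `Σ`.
Then `A ↦ H(c|_A) / log |Σ|` is feasible for the entropy program: Shannon entropy is monotone
and submodular, a single coordinate carries at most `log |Σ|`, and adjoining a coordinate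
spanned by `A` does not change `H`, since on `C` it is a function of `c|_A`. Its value at `X`
is `log |C| / log |Σ|`. Conversely every feasible `f` is subadditive, so `f T ≤ |T|`, and
`f X = f T` for a spanning set `T`. -/

section Span

variable {X : Type} (S : SpanoidOn X)

lemma subset_sSpan (T : Set X) : T ⊆ sSpan S T :=
  fun _ hx _ hT' => hT'.1 hx

lemma sSpan_subset {T T' : Set X} (hT : T ⊆ T') (hclosed : ∀ p ∈ S, p.1 ⊆ T' → p.2 ∈ T') :
    sSpan S T ⊆ T' :=
  Set.sInter_subset_of_mem ⟨hT, hclosed⟩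

lemma sSpan_mono {T U : Set X} (h : T ⊆ U) : sSpan S T ⊆ sSpan S U :=
  fun _ hx T' hT' => hx T' ⟨h.trans hT'.1, hT'.2⟩

lemma sSpan_univ : sSpan S Set.univ = Set.univ :=
  Set.eq_univ_of_univ_subset (subset_sSpan S Set.univ)

end Span

namespace sEntFeasible

variable {X : Type} {S : SpanoidOn X} {f : Set X → ℝ}

lemma nonneg (hf : sEntFeasible S f) (A : Set X) : 0 ≤ f A :=
  hf.1 ▸ hf.2.2.2.1 ∅ A A.empty_subset

lemma le_ncard [Finite X] (hf : sEntFeasible S f) (E : Set X) : f E ≤ E.ncard := by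
  induction E, E.toFinite using Set.Finite.induction_on with
  | empty => simp [hf.1]
  | @insert a E ha hE ih =>
    have h_submod := hf.2.2.1 {a} E
    rw [Set.singleton_union] at h_submod
    rw [Set.ncard_insert_of_notMem ha hE]
    push_cast
    linarith [hf.2.1 a, hf.nonneg ({a} ∩ E)]

lemma union_eq_of_subset_sSpan [Finite X] (hf : sEntFeasible S f) {T E : Set X}
    (hE : E ⊆ sSpan S T) : f (T ∪ E) = f T := by
  induction E, E.toFinite using Set.Finite.induction_on with
  | empty => rw [Set.union_empty]
  | @insert a E _ _ ih =>
    have haT : a ∈ sSpan S (T ∪ E) := sSpan_mono S Set.subset_union_left (hE (E.mem_insert a))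
    rw [Set.union_insert, ← Set.union_singleton, hf.2.2.2.2 _ a haT,
      ih ((E.subset_insert a).trans hE)]

lemma univ_le_sRank [Fintype X] (hf : sEntFeasible S f) : f Set.univ ≤ sRank S := by
  obtain ⟨T, hT_card, hT_span⟩ : sRank S ∈ {k | ∃ T : Set X, T.ncard = k ∧ sSpan S T = .univ} :=
    Nat.sInf_mem ⟨_, .univ, rfl, sSpan_univ S⟩
  have hT : f Set.univ = f T := by
    rw [← hf.union_eq_of_subset_sSpan hT_span.ge, Set.union_univ]
  rw [hT, ← hT_card]
  exact hf.le_ncard T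

end sEntFeasible

lemma sum_inv_card_le_one {α : Type*} {T : Finset α} (F : α → Finset α)
    (hT : ∀ c ∈ T, T ⊆ F c) : ∑ c ∈ T, ((#(F c) : ℝ))⁻¹ ≤ 1 := by
  rcases T.eq_empty_or_nonempty with rfl | hne
  · simp
  have hT_pos : (0 : ℝ) < #T := by exact_mod_cast hne.card_pos
  calc ∑ c ∈ T, ((#(F c) : ℝ))⁻¹ ≤ ∑ _c ∈ T, ((#T : ℝ))⁻¹ :=
        sum_le_sum fun c hc => inv_anti₀ hT_pos (by exact_mod_cast card_le_card (hT c hc))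
    _ = 1 := by rw [sum_const, nsmul_eq_mul, mul_inv_cancel₀ hT_pos.ne']

lemma sum_log_nonpos_of_sum_le_card {ι : Type*} (s : Finset ι) (r : ι → ℝ)
    (hr : ∀ i ∈ s, 0 < r i) (hsum : ∑ i ∈ s, r i ≤ #s) : ∑ i ∈ s, Real.log (r i) ≤ 0 :=
  calc ∑ i ∈ s, Real.log (r i) ≤ ∑ i ∈ s, (r i - 1) :=
        sum_le_sum fun i hi => Real.log_le_sub_one_of_pos (hr i hi)
    _ = ∑ i ∈ s, r i - #s := by simp [sum_sub_distrib]
    _ ≤ 0 := by linarith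

section CodeEntropy

variable {X K : Type}

open Classical

noncomputable def codeFiber (C : Finset (X → K)) (A : Set X) (c : X → K) : Finset (X → K) :=
  {c' ∈ C | Set.EqOn c' c A}

variable {C : Finset (X → K)} {A B : Set X} {c c' : X → K}

lemma mem_codeFiber : c' ∈ codeFiber C A c ↔ c' ∈ C ∧ Set.EqOn c' c A := by
  unfold codeFiber
  exact mem_filter

lemma codeFiber_subset : codeFiber C A c ⊆ C :=
  fun _ h => (mem_codeFiber.1 h).1

lemma self_mem_codeFiber (hc : c ∈ C) : c ∈ codeFiber C A c :=
  mem_codeFiber.2 ⟨hc, Set.eqOn_refl c A⟩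

lemma card_codeFiber_pos (hc : c ∈ C) : (0 : ℝ) < #(codeFiber C A c) := by
  exact_mod_cast card_pos.2 ⟨c, self_mem_codeFiber hc⟩

lemma codeFiber_anti (h : A ⊆ B) : codeFiber C B c ⊆ codeFiber C A c :=
  fun _ hx => mem_codeFiber.2 ⟨(mem_codeFiber.1 hx).1, (mem_codeFiber.1 hx).2.mono h⟩

lemma codeFiber_of_mem (h : c' ∈ codeFiber C A c) : codeFiber C A c' = codeFiber C A c := by
  ext d
  simp only [mem_codeFiber]
  have hc' := (mem_codeFiber.1 h).2
  exact and_congr_right fun _ => ⟨fun hd => hd.trans hc', fun hd => hd.trans hc'.symm⟩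

lemma codeFiber_empty : codeFiber C ∅ c = C := by
  ext d
  simp [mem_codeFiber]

lemma codeFiber_univ (hc : c ∈ C) : codeFiber C Set.univ c = {c} := by
  ext d
  simp only [mem_codeFiber, Set.eqOn_univ, mem_singleton]
  exact ⟨fun h => h.2, fun h => ⟨h ▸ hc, h⟩⟩

lemma codeFiber_union : codeFiber C (A ∪ B) c = codeFiber C A c ∩ codeFiber C B c := by
  ext d
  simp only [mem_codeFiber, mem_inter, Set.eqOn_union]
  tauto


lemma sum_inv_card_codeFiber_inter_le {a b : X → K} (hb : b ∈ C) :
    ∑ c ∈ codeFiber C A a ∩ codeFiber C B b,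
        ((#(codeFiber C (A ∪ B) c) : ℝ) * #(codeFiber C (A ∩ B) c))⁻¹
      ≤ if b ∈ codeFiber C (A ∩ B) a then ((#(codeFiber C (A ∩ B) a) : ℝ))⁻¹ else 0 := by
  set T := codeFiber C A a ∩ codeFiber C B b
  rcases T.eq_empty_or_nonempty with hT | ⟨c₀, hc₀⟩
  · rw [hT, sum_empty]
    split_ifs <;> positivity
  have hc₀A := (mem_codeFiber.1 (mem_inter.1 hc₀).1).2
  have hc₀B := (mem_codeFiber.1 (mem_inter.1 hc₀).2).2
  have hab : b ∈ codeFiber C (A ∩ B) a :=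
    mem_codeFiber.2 ⟨hb, fun x hx => (hc₀B hx.2).symm.trans (hc₀A hx.1)⟩
  have h_inter (c) (hc : c ∈ T) : codeFiber C (A ∩ B) c = codeFiber C (A ∩ B) a :=
    codeFiber_of_mem (codeFiber_anti Set.inter_subset_left (mem_inter.1 hc).1)
  have h_union (c) (hc : c ∈ T) : T ⊆ codeFiber C (A ∪ B) c := by
    rw [codeFiber_union, codeFiber_of_mem (mem_inter.1 hc).1, codeFiber_of_mem (mem_inter.1 hc).2]
  rw [if_pos hab]
  calc ∑ c ∈ T, ((#(codeFiber C (A ∪ B) c) : ℝ) * #(codeFiber C (A ∩ B) c))⁻¹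
      = (∑ c ∈ T, ((#(codeFiber C (A ∪ B) c) : ℝ))⁻¹) * (#(codeFiber C (A ∩ B) a) : ℝ)⁻¹ := by
        rw [sum_mul]
        exact sum_congr rfl fun c hc => by rw [h_inter c hc, mul_inv]
    _ ≤ 1 * (#(codeFiber C (A ∩ B) a) : ℝ)⁻¹ :=
        mul_le_mul_of_nonneg_right (sum_inv_card_le_one _ h_union) (by positivity)
    _ = _ := one_mul _

/-- Double counting of the triples `(a, b, c)` with `a ≈ c` on `A` and `b ≈ c` on `B`. -/
lemma sum_card_codeFiber_mul_div_le (C : Finset (X → K)) (A B : Set X) :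
    ∑ c ∈ C, (#(codeFiber C A c) : ℝ) * #(codeFiber C B c) /
        ((#(codeFiber C (A ∪ B) c) : ℝ) * #(codeFiber C (A ∩ B) c)) ≤ #C := by
  set D : (X → K) → ℝ := fun c => (#(codeFiber C (A ∪ B) c) : ℝ) * #(codeFiber C (A ∩ B) c)
  have h_swap (c : X → K) (p : (X → K) × (X → K)) :
      c ∈ C ∧ p ∈ codeFiber C A c ×ˢ codeFiber C B c ↔
        c ∈ codeFiber C A p.1 ∩ codeFiber C B p.2 ∧ p ∈ C ×ˢ C := by
    simp only [mem_product, mem_inter, mem_codeFiber, Set.eqOn_comm (f₁ := p.1),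
      Set.eqOn_comm (f₁ := p.2)]
    tauto
  calc ∑ c ∈ C, (#(codeFiber C A c) : ℝ) * #(codeFiber C B c) / D c
      = ∑ c ∈ C, ∑ _p ∈ codeFiber C A c ×ˢ codeFiber C B c, (D c)⁻¹ := by
        refine sum_congr rfl fun c _ => ?_
        rw [sum_const, card_product, nsmul_eq_mul, div_eq_mul_inv]
        push_cast
        rfl
    _ = ∑ p ∈ C ×ˢ C, ∑ c ∈ codeFiber C A p.1 ∩ codeFiber C B p.2, (D c)⁻¹ := sum_comm' h_swap
    _ ≤ ∑ p ∈ C ×ˢ C, if p.2 ∈ codeFiber C (A ∩ B) p.1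
          then ((#(codeFiber C (A ∩ B) p.1) : ℝ))⁻¹ else 0 :=
        sum_le_sum fun p hp => sum_inv_card_codeFiber_inter_le (mem_product.1 hp).2
    _ = ∑ a ∈ C, ∑ _b ∈ codeFiber C (A ∩ B) a, ((#(codeFiber C (A ∩ B) a) : ℝ))⁻¹ := by
        rw [sum_product]
        refine sum_congr rfl fun a _ => ?_
        dsimp only
        rw [sum_ite_mem, inter_eq_right.2 codeFiber_subset]
    _ = #C := by
        rw [← Nat.smul_one_eq_cast, ← sum_const]
        refine sum_congr rfl fun a ha => ?_
        rw [sum_const, nsmul_eq_mul, mul_inv_cancel₀ (card_codeFiber_pos ha).ne']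

/-- The Shannon entropy of `c|_A` for `c` uniform on `C`: the value of `c|_A` has probability
`#(codeFiber C A c) / #C`. -/
noncomputable def codeEntropy (C : Finset (X → K)) (A : Set X) : ℝ :=
  Real.log #C - (∑ c ∈ C, Real.log #(codeFiber C A c)) / #C

lemma codeEntropy_empty : codeEntropy C ∅ = 0 := by
  simp only [codeEntropy, codeFiber_empty, sum_const, nsmul_eq_mul]
  rcases eq_or_ne (#C : ℝ) 0 with h | h
  · simp [h]
  · rw [mul_div_cancel_left₀ _ h, sub_self]

lemma codeEntropy_univ : codeEntropy C Set.univ = Real.log #C := by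
  have h : ∑ c ∈ C, Real.log #(codeFiber C Set.univ c) = 0 :=
    sum_eq_zero fun c hc => by simp [codeFiber_univ hc]
  rw [codeEntropy, h, zero_div, sub_zero]

lemma codeEntropy_mono (h : A ⊆ B) : codeEntropy C A ≤ codeEntropy C B := by
  have h_sum : ∑ c ∈ C, Real.log #(codeFiber C B c) ≤ ∑ c ∈ C, Real.log #(codeFiber C A c) :=
    sum_le_sum fun c hc => Real.log_le_log (card_codeFiber_pos hc)
      (by exact_mod_cast card_le_card (codeFiber_anti h))
  have := div_le_div_of_nonneg_right h_sum (Nat.cast_nonneg (α := ℝ) #C)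
  rw [codeEntropy, codeEntropy]
  linarith

lemma codeEntropy_union_add_inter_le :
    codeEntropy C (A ∪ B) + codeEntropy C (A ∩ B) ≤ codeEntropy C A + codeEntropy C B := by
  simp only [codeEntropy]
  set L : Set X → (X → K) → ℝ := fun E c => Real.log #(codeFiber C E c)
  have h_log (c) (hc : c ∈ C) :
      Real.log ((#(codeFiber C A c) : ℝ) * #(codeFiber C B c) /
        ((#(codeFiber C (A ∪ B) c) : ℝ) * #(codeFiber C (A ∩ B) c)))
        = L A c + L B c - L (A ∪ B) c - L (A ∩ B) c := by
    have := fun E => (card_codeFiber_pos (A := E) hc).ne'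
    rw [Real.log_div (by simp [this]) (by simp [this]), Real.log_mul (this A) (this B),
      Real.log_mul (this _) (this _)]
    ring
  have h_gibbs := sum_log_nonpos_of_sum_le_card C _
    (fun c hc => by
      have := card_codeFiber_pos (A := A) hc; have := card_codeFiber_pos (A := B) hc
      have := card_codeFiber_pos (A := A ∪ B) hc; have := card_codeFiber_pos (A := A ∩ B) hc
      positivity)
    (sum_card_codeFiber_mul_div_le C A B)
  rw [sum_congr rfl h_log] at h_gibbs
  simp only [sum_sub_distrib, sum_add_distrib] at h_gibbs
  have h_sum : ∑ c ∈ C, L A c + ∑ c ∈ C, L B c ≤ ∑ c ∈ C, L (A ∪ B) c + ∑ c ∈ C, L (A ∩ B) c := by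
    linarith
  have := div_le_div_of_nonneg_right h_sum (Nat.cast_nonneg (α := ℝ) #C)
  rw [add_div, add_div] at this
  linarith

lemma codeEntropy_le_log {m : ℕ} (h : ∑ c ∈ C, ((#(codeFiber C A c) : ℝ))⁻¹ ≤ m) :
    codeEntropy C A ≤ Real.log m := by
  rcases C.eq_empty_or_nonempty with rfl | hC
  · simpa [codeEntropy] using Real.log_natCast_nonneg m
  have hn : (0 : ℝ) < #C := by exact_mod_cast hC.card_pos
  have hm : (0 : ℝ) < m := h.trans_lt' <| sum_pos (fun c hc => inv_pos.2 (card_codeFiber_pos hc)) hC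
  have h_gibbs := sum_log_nonpos_of_sum_le_card C
    (fun c => #C / (m * #(codeFiber C A c))) (fun c hc => by
      have := card_codeFiber_pos (A := A) hc; positivity) (by
      calc ∑ c ∈ C, (#C : ℝ) / (m * #(codeFiber C A c))
          = #C / m * ∑ c ∈ C, ((#(codeFiber C A c) : ℝ))⁻¹ := by
            rw [mul_sum]
            exact sum_congr rfl fun c _ => by field_simp
        _ ≤ #C / m * m := by gcongr
        _ = #C := div_mul_cancel₀ _ hm.ne')
  rw [sum_congr rfl fun c hc => by
    rw [Real.log_div hn.ne' (mul_pos hm (card_codeFiber_pos hc)).ne',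
      Real.log_mul hm.ne' (card_codeFiber_pos hc).ne']] at h_gibbs
  simp only [sum_sub_distrib, sum_add_distrib, sum_const, nsmul_eq_mul] at h_gibbs
  rw [codeEntropy, sub_le_iff_le_add, ← sub_le_iff_le_add', le_div_iff₀ hn]
  linarith

lemma sum_inv_card_codeFiber_singleton_le [Fintype K] (i : X) :
    ∑ c ∈ C, ((#(codeFiber C {i} c) : ℝ))⁻¹ ≤ Fintype.card K := by
  rw [← sum_fiberwise_of_maps_to (g := fun c => c i) (t := univ) fun c _ => mem_univ _]
  calc ∑ v, ∑ c ∈ C with c i = v, ((#(codeFiber C {i} c) : ℝ))⁻¹ ≤ ∑ _v : K, (1 : ℝ) :=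
        sum_le_sum fun v _ => sum_inv_card_le_one _ fun c hc d hd => by
          simp only [mem_filter] at hc hd
          exact mem_codeFiber.2 ⟨hd.1, by simp [hc.2, hd.2]⟩
    _ = Fintype.card K := by simp

end CodeEntropy

section Codes

variable {X K : Type} {S : SpanoidOn X}

lemma sConsistent.eqOn_sSpan {C : Set (X → K)} (hC : sConsistent S C) {c c' : X → K}
    (hc : c ∈ C) (hc' : c' ∈ C) {A : Set X} (h : Set.EqOn c c' A) :
    Set.EqOn c c' (sSpan S A) :=
  sSpan_subset S (T' := {x | c x = c' x}) h fun p hp hsub => by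
    obtain ⟨g, hg⟩ := hC p hp
    show c p.2 = c' p.2
    rw [hg c hc, hg c' hc']
    exact congrArg g (funext fun a => hsub a.2)

lemma codeEntropy_union_singleton {C : Finset (X → K)} (hC : sConsistent S (C : Set (X → K)))
    {A : Set X} {i : X} (hi : i ∈ sSpan S A) : codeEntropy C (A ∪ {i}) = codeEntropy C A := by
  have h_fiber (c) (hc : c ∈ C) : codeFiber C (A ∪ {i}) c = codeFiber C A c := by
    refine (codeFiber_anti Set.subset_union_left).antisymm fun c' hc' => ?_
    obtain ⟨hc'C, hc'A⟩ := mem_codeFiber.1 hc'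
    have hc'i := hC.eqOn_sSpan hc'C hc hc'A hi
    exact mem_codeFiber.2 ⟨hc'C, Set.eqOn_union.2 ⟨hc'A, by simpa using hc'i⟩⟩
  simp only [codeEntropy]
  rw [sum_congr rfl fun c hc => by rw [h_fiber c hc]]

lemma sEntFeasible_codeEntropy_div [Fintype K] (hK : 1 < Fintype.card K) {C : Finset (X → K)}
    (hC : sConsistent S (C : Set (X → K))) :
    sEntFeasible S fun A => codeEntropy C A / Real.log (Fintype.card K) := by
  have hlog : 0 < Real.log (Fintype.card K) := Real.log_pos (by exact_mod_cast hK)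
  refine ⟨by simp [codeEntropy_empty], fun i => ?_, fun A B => ?_, fun A B h => ?_,
    fun A i hi => by simp only [codeEntropy_union_singleton hC hi]⟩
  · exact (div_le_one hlog).2
      (codeEntropy_le_log (sum_inv_card_codeFiber_singleton_le i))
  · rw [← add_div, ← add_div]
    exact div_le_div_of_nonneg_right codeEntropy_union_add_inter_le hlog.le
  · exact div_le_div_of_nonneg_right (codeEntropy_mono h) hlog.le

end Codes

lemma sEntFeasible_zero {X : Type} (S : SpanoidOn X) : sEntFeasible S fun _ => 0 :=
  ⟨rfl, fun _ => zero_le_one, fun _ _ => by norm_num, fun _ _ _ => le_rfl, fun _ _ _ => rfl⟩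

section LinearProgram

variable {X : Type} [Fintype X] (S : SpanoidOn X)

lemma sLPentropy_bddAbove : BddAbove {y | ∃ f : Set X → ℝ, sEntFeasible S f ∧ y = f Set.univ} :=
  ⟨sRank S, by rintro _ ⟨f, hf, rfl⟩; exact hf.univ_le_sRank⟩

lemma le_sLPentropy {f : Set X → ℝ} (hf : sEntFeasible S f) : f Set.univ ≤ sLPentropy S :=
  le_csSup (sLPentropy_bddAbove S) ⟨f, hf, rfl⟩

lemma sLPentropy_le_sRank : sLPentropy S ≤ sRank S :=
  csSup_le ⟨0, _, sEntFeasible_zero S, rfl⟩ (by rintro _ ⟨f, hf, rfl⟩; exact hf.univ_le_sRank)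

lemma sFrank_le_sLPentropy : sFrank S ≤ sLPentropy S := by
  refine csSup_le ⟨0, 2, le_rfl, ∅, fun _ _ => ⟨fun _ => 0, by simp⟩, by simp⟩ ?_
  rintro _ ⟨m, hm, C, hC, rfl⟩
  have hC' : sConsistent S (C.toFinite.toFinset : Set (X → Fin m)) := by
    rwa [Set.Finite.coe_toFinset]
  have h := le_sLPentropy S (sEntFeasible_codeEntropy_div (by rw [Fintype.card_fin]; omega) hC')
  rwa [codeEntropy_univ, Fintype.card_fin, ← Set.ncard_eq_toFinset_card,
    ← Nat.card_coe_set_eq] at h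

end LinearProgram

/-- For every spanoid, `f-rank(S) ≤ LP^entropy(S) ≤ rank(S)`. -/
theorem frank_le_LPentropy_le_rank {X : Type} [Fintype X] (S : SpanoidOn X) :
    sFrank S ≤ sLPentropy S ∧ sLPentropy S ≤ (sRank S : ℝ) :=
  ⟨sFrank_le_sLPentropy S, sLPentropy_le_sRank S⟩
end

section
/- For every spanoid S on [n] there exist a finite set U and subsets S₁,...,S_n ⊆ U such that for all A ⊆ [n] and all i ∈ [n]: i ∈ span_S(A) if and only if ∩_{a∈A} S_a ⊆ S_i (with the convention that the intersection over the empty index set is U). Consequently, the intersection dimension of (S₁,...,S_n) — the least d such that some A ⊆ [n] with |A| = d satisfies ∩_{a∈A} S_a = S₁ ∩ ... ∩ S_n — equals rank(S). -/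
open scoped BigOperators

/-- every spanoid on `[n]` has a set-representation `S₁, …, S_n ⊆ U` with
`i ∈ span(A)` iff `⋂_{a ∈ A} S_a ⊆ S_i`, and then the intersection dimension of the family
equals the rank of the spanoid. -/
theorem set_representation_exists {n : ℕ} (S : SpanoidOn (Fin n)) :
    ∃ (U : Type) (_ : Fintype U) (Sets : Fin n → Set U),
      (∀ (A : Set (Fin n)) (i : Fin n),
        i ∈ sSpan S A ↔ (⋂ a ∈ A, Sets a) ⊆ Sets i) ∧
      sInf {d : ℕ | ∃ A : Set (Fin n), A.ncard = d ∧
        (⋂ a ∈ A, Sets a) = ⋂ i, Sets i} = sRank S := by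
  classical
  refine ⟨Set (Fin n), inferInstance,
    fun a => {T' : Set (Fin n) | (∀ p ∈ S, p.1 ⊆ T' → p.2 ∈ T') → a ∈ T'}, ?_, ?_⟩
  case refine_1 =>
    intro A i
    constructor
    · intro hi T' hT' hrc
      exact hi T' ⟨fun a ha => (Set.mem_iInter₂.1 hT' a ha) hrc, hrc⟩
    · rintro h T' ⟨hAT, hrc⟩
      exact h (Set.mem_iInter₂.2 fun a ha _ => hAT ha) hrc
  case refine_2 =>
    have key : ∀ A : Set (Fin n),
        ((⋂ a ∈ A, {T' : Set (Fin n) | (∀ p ∈ S, p.1 ⊆ T' → p.2 ∈ T') → a ∈ T'}) =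
          ⋂ i, {T' : Set (Fin n) | (∀ p ∈ S, p.1 ⊆ T' → p.2 ∈ T') → i ∈ T'}) ↔
        sSpan S A = Set.univ := by
      intro A
      constructor
      · intro hEq
        ext i
        simp only [Set.mem_univ, iff_true]
        rintro T' ⟨hAT, hrc⟩
        have : T' ∈ ⋂ a ∈ A, {T' : Set (Fin n) |
            (∀ p ∈ S, p.1 ⊆ T' → p.2 ∈ T') → a ∈ T'} :=
          Set.mem_iInter₂.2 fun a ha _ => hAT ha
        rw [hEq] at this
        exact Set.mem_iInter.1 this i hrc
      · intro hsp
        apply Set.Subset.antisymm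
        · intro T' hT'
          refine Set.mem_iInter.2 fun i hrc => ?_
          have hi : i ∈ sSpan S A := hsp ▸ Set.mem_univ i
          exact hi T' ⟨fun a ha => (Set.mem_iInter₂.1 hT' a ha) hrc, hrc⟩
        · intro T' hT'
          exact Set.mem_iInter₂.2 fun a ha => Set.mem_iInter.1 hT' a
    unfold sRank
    congr 1
    ext k
    constructor
    · rintro ⟨A, hA, hEq⟩
      exact ⟨A, hA, (key A).1 hEq⟩
    · rintro ⟨A, hA, hsp⟩
      exact ⟨A, hA, (key A).2 hsp⟩
end

section
/- For all spanoids S₁ on a finite set X₁ and S₂ on a finite set X₂: LP^cover(S₁ ⊙ S₂) = LP^cover(S₁) · LP^cover(S₂). -/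
open scoped BigOperators

/-- The open sets of the product spanoid `S₁ ⊙ S₂`: all unions of products `A × B` of an open
set `A` of `S₁` with an open set `B` of `S₂`. -/
def odotOpens {X₁ X₂ : Type} (S₁ : SpanoidOn X₁) (S₂ : SpanoidOn X₂) :
    Set (Set (X₁ × X₂)) :=
  {U | ∃ F : Set (Set X₁ × Set X₂),
    (∀ p ∈ F, sOpen S₁ p.1 ∧ sOpen S₂ p.2) ∧ U = ⋃ p ∈ F, p.1 ×ˢ p.2}

/-- The product spanoid `S₁ ⊙ S₂`, determined by its open sets: `A` spans `i` iff `i` lies in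
every closed set (complement of a set in `odotOpens`) containing `A`. -/
def odot {X₁ X₂ : Type} (S₁ : SpanoidOn X₁) (S₂ : SpanoidOn X₂) :
    SpanoidOn (X₁ × X₂) :=
  {p | ∀ F : Set (X₁ × X₂), Fᶜ ∈ odotOpens S₁ S₂ → p.1 ⊆ F → p.2 ∈ F}

section Aux

variable {X₁ X₂ : Type}

lemma sSpan_odot (S₁ : SpanoidOn X₁) (S₂ : SpanoidOn X₂) (F : Set (X₁ × X₂)) :
    sSpan (odot S₁ S₂) F = ⋂₀ {C | Cᶜ ∈ odotOpens S₁ S₂ ∧ F ⊆ C} := by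
  apply subset_antisymm
  · intro x hx
    refine Set.mem_sInter.2 fun C hC => ?_
    exact Set.mem_sInter.1 hx C ⟨hC.2, fun p hp hsub => hp C hC.1 hsub⟩
  · intro x hx
    refine Set.mem_sInter.2 fun T' hT' => ?_
    exact hT'.2 (F, x) (fun G hG hFG => Set.mem_sInter.1 hx G ⟨hG, hFG⟩) hT'.1

lemma odotOpens_prod {S₁ : SpanoidOn X₁} {S₂ : SpanoidOn X₂} {A : Set X₁} {B : Set X₂}
    (hA : sOpen S₁ A) (hB : sOpen S₂ B) : A ×ˢ B ∈ odotOpens S₁ S₂ := by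
  refine ⟨{(A, B)}, ?_, ?_⟩
  · rintro p rfl; exact ⟨hA, hB⟩
  · simp

lemma odotOpens_sUnion {S₁ : SpanoidOn X₁} {S₂ : SpanoidOn X₂}
    (𝒰 : Set (Set (X₁ × X₂))) (h : 𝒰 ⊆ odotOpens S₁ S₂) : ⋃₀ 𝒰 ∈ odotOpens S₁ S₂ := by
  refine ⟨{p | (sOpen S₁ p.1 ∧ sOpen S₂ p.2) ∧ p.1 ×ˢ p.2 ⊆ ⋃₀ 𝒰}, fun p hp => hp.1, ?_⟩
  apply subset_antisymm
  · rintro x ⟨U, hU, hxU⟩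
    obtain ⟨G, hG, rfl⟩ := h hU
    obtain ⟨q, hq, hxq⟩ := Set.mem_iUnion₂.1 hxU
    exact Set.mem_iUnion₂.2 ⟨q, ⟨hG q hq, (Set.subset_iUnion₂ q hq).trans
      (Set.subset_sUnion_of_mem hU)⟩, hxq⟩
  · intro x hx
    obtain ⟨q, hq, hxq⟩ := Set.mem_iUnion₂.1 hx
    exact hq.2 hxq

lemma sOpen_odot_iff {S₁ : SpanoidOn X₁} {S₂ : SpanoidOn X₂} {U : Set (X₁ × X₂)} :
    sOpen (odot S₁ S₂) U ↔ U ∈ odotOpens S₁ S₂ := by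
  constructor
  · intro h
    unfold sOpen sClosed at h
    rw [sSpan_odot] at h
    have hU : U = ⋃₀ {V | V ∈ odotOpens S₁ S₂ ∧ V ⊆ U} := by
      apply subset_antisymm
      · intro x hx
        have hx' : x ∉ Uᶜ := fun hc => hc hx
        rw [← h] at hx'
        rw [Set.mem_sInter] at hx'
        push_neg at hx'
        obtain ⟨C, hC, hxC⟩ := hx'
        refine Set.mem_sUnion.2 ⟨Cᶜ, ⟨hC.1, ?_⟩, hxC⟩
        rw [Set.compl_subset_comm]; exact hC.2
      · rintro x ⟨V, hV, hxV⟩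
        exact hV.2 hxV
    rw [hU]
    exact odotOpens_sUnion _ fun V hV => hV.1
  · intro h
    unfold sOpen sClosed
    rw [sSpan_odot]
    apply subset_antisymm
    · exact Set.sInter_subset_of_mem ⟨by rwa [compl_compl], subset_rfl⟩
    · intro x hx
      exact Set.mem_sInter.2 fun C hC => hC.2 hx

end Aux

section LP

variable {X : Type} [Fintype X]

def FeasSet (S : SpanoidOn X) : Set ℝ :=
  {y : ℝ | ∃ x : X → ℝ, (∀ i, 0 ≤ x i) ∧
    (∀ B : Set X, B.Nonempty → sOpen S B → 1 ≤ ∑ i, B.indicator x i) ∧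
    y = ∑ i, x i}

lemma sLPcover_eq (S : SpanoidOn X) : sLPcover S = sInf (FeasSet S) := rfl

lemma FeasSet_nonneg (S : SpanoidOn X) : ∀ y ∈ FeasSet S, (0:ℝ) ≤ y := by
  rintro y ⟨x, hx0, _, rfl⟩
  exact Finset.sum_nonneg fun i _ => hx0 i

lemma FeasSet_bddBelow (S : SpanoidOn X) : BddBelow (FeasSet S) :=
  ⟨0, fun y hy => FeasSet_nonneg S y hy⟩

lemma FeasSet_nonempty (S : SpanoidOn X) : (FeasSet S).Nonempty := by
  refine ⟨∑ i : X, (1:ℝ), fun _ => 1, fun i => zero_le_one, fun B hB hBo => ?_, rfl⟩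
  obtain ⟨b, hb⟩ := hB
  calc (1:ℝ) = B.indicator (fun _ => (1:ℝ)) b := by simp [hb]
    _ ≤ ∑ i, B.indicator (fun _ => (1:ℝ)) i :=
        Finset.single_le_sum (fun i _ => Set.indicator_nonneg (fun _ _ => zero_le_one) i)
          (Finset.mem_univ b)

lemma FeasSet_one_le (S : SpanoidOn X) (h : ∃ B : Set X, B.Nonempty ∧ sOpen S B) :
    ∀ y ∈ FeasSet S, (1:ℝ) ≤ y := by
  rintro y ⟨x, hx0, hxF, rfl⟩
  obtain ⟨B, hBne, hBo⟩ := h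
  calc (1:ℝ) ≤ ∑ i, B.indicator x i := hxF B hBne hBo
    _ ≤ ∑ i, x i := Finset.sum_le_sum fun i _ => Set.indicator_le_self' (fun j _ => hx0 j) i

lemma one_le_sLPcover (S : SpanoidOn X) (h : ∃ B : Set X, B.Nonempty ∧ sOpen S B) :
    (1:ℝ) ≤ sLPcover S :=
  le_csInf (FeasSet_nonempty S) (FeasSet_one_le S h)

lemma sLPcover_eq_zero (S : SpanoidOn X) (h : ¬ ∃ B : Set X, B.Nonempty ∧ sOpen S B) :
    sLPcover S = 0 := by
  apply le_antisymm
  · exact csInf_le (FeasSet_bddBelow S)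
      ⟨fun _ => 0, fun i => le_rfl, fun B hBne hBo => (h ⟨B, hBne, hBo⟩).elim, by simp⟩
  · exact le_csInf (FeasSet_nonempty S) (FeasSet_nonneg S)

end LP

section Sums

variable {X₁ X₂ : Type} [Fintype X₁] [Fintype X₂]

lemma sum_indicator_prod (A : Set X₁) (B : Set X₂) (x₁ : X₁ → ℝ) (x₂ : X₂ → ℝ) :
    ∑ p : X₁ × X₂, (A ×ˢ B).indicator (fun q => x₁ q.1 * x₂ q.2) p
      = (∑ i, A.indicator x₁ i) * (∑ j, B.indicator x₂ j) := by
  rw [Fintype.sum_prod_type, Finset.sum_mul_sum]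
  refine Finset.sum_congr rfl fun i _ => Finset.sum_congr rfl fun j _ => ?_
  by_cases hi : i ∈ A <;> by_cases hj : j ∈ B <;>
    simp [Set.indicator_apply, hi, hj]

lemma sum_indicator_prod' (A : Set X₁) (B : Set X₂) (x : X₁ × X₂ → ℝ) :
    ∑ p : X₁ × X₂, (A ×ˢ B).indicator x p
      = ∑ j, B.indicator (fun j => ∑ i, A.indicator (fun i => x (i, j)) i) j := by
  rw [Fintype.sum_prod_type, Finset.sum_comm]
  refine Finset.sum_congr rfl fun j _ => ?_
  by_cases hj : j ∈ B
  · simp only [Set.indicator_of_mem hj]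
    refine Finset.sum_congr rfl fun i _ => ?_
    by_cases hi : i ∈ A <;> simp [Set.indicator_apply, hi, hj]
  · simp only [Set.indicator_of_notMem hj]
    refine Finset.sum_eq_zero fun i _ => ?_
    by_cases hi : i ∈ A <;> simp [Set.indicator_apply, hi, hj]

end Sums


/-- `LP^cover` is multiplicative under the product `⊙`. -/
theorem LPcover_odot_mul {X₁ X₂ : Type} [Fintype X₁] [Fintype X₂]
    (S₁ : SpanoidOn X₁) (S₂ : SpanoidOn X₂) :
    sLPcover (odot S₁ S₂) = sLPcover S₁ * sLPcover S₂ := by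
  by_cases h1 : ∃ B : Set X₁, B.Nonempty ∧ sOpen S₁ B
  · by_cases h2 : ∃ B : Set X₂, B.Nonempty ∧ sOpen S₂ B
    · -- main case
      have hLP1 : (1:ℝ) ≤ sLPcover S₁ := one_le_sLPcover S₁ h1
      have hLP2 : (1:ℝ) ≤ sLPcover S₂ := one_le_sLPcover S₂ h2
      have hLP1pos : (0:ℝ) < sLPcover S₁ := lt_of_lt_of_le one_pos hLP1
      have hLP2pos : (0:ℝ) < sLPcover S₂ := lt_of_lt_of_le one_pos hLP2
      apply le_antisymm
      · -- sLPcover (odot S₁ S₂) ≤ sLPcover S₁ * sLPcover S₂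
        have key : ∀ y₁ ∈ FeasSet S₁, ∀ y₂ ∈ FeasSet S₂,
            sLPcover (odot S₁ S₂) ≤ y₁ * y₂ := by
          rintro y₁ ⟨x₁, h10, h1F, rfl⟩ y₂ ⟨x₂, h20, h2F, rfl⟩
          rw [sLPcover_eq]
          refine csInf_le (FeasSet_bddBelow _) ⟨fun p => x₁ p.1 * x₂ p.2,
            fun p => mul_nonneg (h10 p.1) (h20 p.2), ?_, ?_⟩
          · intro U hUne hUo
            obtain ⟨F, hF, rfl⟩ := sOpen_odot_iff.1 hUo
            obtain ⟨u, hu⟩ := hUne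
            obtain ⟨q, hq, huq⟩ := Set.mem_iUnion₂.1 hu
            have hq1 : (q.1 : Set X₁).Nonempty := ⟨u.1, huq.1⟩
            have hq2 : (q.2 : Set X₂).Nonempty := ⟨u.2, huq.2⟩
            calc (1:ℝ) = 1 * 1 := (one_mul 1).symm
              _ ≤ (∑ i, q.1.indicator x₁ i) * (∑ j, q.2.indicator x₂ j) :=
                  mul_le_mul (h1F q.1 hq1 (hF q hq).1) (h2F q.2 hq2 (hF q hq).2)
                    zero_le_one (le_trans zero_le_one (h1F q.1 hq1 (hF q hq).1))
              _ = ∑ p : X₁ × X₂, (q.1 ×ˢ q.2).indicator (fun r => x₁ r.1 * x₂ r.2) p :=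
                  (sum_indicator_prod _ _ _ _).symm
              _ ≤ ∑ p : X₁ × X₂, (⋃ r ∈ F, r.1 ×ˢ r.2).indicator
                    (fun r => x₁ r.1 * x₂ r.2) p := by
                  have hsub : q.1 ×ˢ q.2 ⊆ ⋃ r ∈ F, r.1 ×ˢ r.2 := Set.subset_iUnion₂ (s := fun (r : Set X₁ × Set X₂) (_ : r ∈ F) => r.1 ×ˢ r.2) q hq
                  exact Finset.sum_le_sum fun p _ =>
                    Set.indicator_le_indicator_of_subset hsub
                      (fun r => mul_nonneg (h10 r.1) (h20 r.2)) p
          · rw [Fintype.sum_prod_type, Finset.sum_mul_sum]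
        have step : ∀ y₂ ∈ FeasSet S₂, sLPcover (odot S₁ S₂) ≤ sLPcover S₁ * y₂ := by
          intro y₂ hy₂
          have hy₂pos : (0:ℝ) < y₂ := lt_of_lt_of_le one_pos (FeasSet_one_le S₂ h2 y₂ hy₂)
          rw [← div_le_iff₀ hy₂pos]
          refine le_csInf (FeasSet_nonempty S₁) fun y₁ hy₁ => ?_
          rw [div_le_iff₀ hy₂pos]
          exact key y₁ hy₁ y₂ hy₂
        have step' : ∀ y₂ ∈ FeasSet S₂, sLPcover (odot S₁ S₂) / sLPcover S₁ ≤ y₂ :=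
          fun y₂ hy₂ => (div_le_iff₀ hLP1pos).2 ((step y₂ hy₂).trans_eq (mul_comm _ _))
        rw [mul_comm, ← div_le_iff₀ hLP1pos]
        exact le_csInf (FeasSet_nonempty S₂) step'
      · -- sLPcover S₁ * sLPcover S₂ ≤ sLPcover (odot S₁ S₂)
        refine le_csInf (FeasSet_nonempty _) ?_
        rintro y ⟨x, hx0, hxF, rfl⟩
        set x₁ : X₁ → ℝ := fun i => (∑ j, x (i, j)) / sLPcover S₂ with hx₁def
        have hfeas1 : (∑ i, x₁ i) ∈ FeasSet S₁ := by
          refine ⟨x₁, fun i => div_nonneg (Finset.sum_nonneg fun j _ => hx0 (i, j))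
            hLP2pos.le, ?_, rfl⟩
          intro A hAne hAo
          set z : X₂ → ℝ := fun j => ∑ i, A.indicator (fun i => x (i, j)) i with hzdef
          have hz0 : ∀ j, 0 ≤ z j := fun j =>
            Finset.sum_nonneg fun i _ => Set.indicator_nonneg (fun i' _ => hx0 (i', j)) i
          have hzfeas : (∑ j, z j) ∈ FeasSet S₂ := by
            refine ⟨z, hz0, ?_, rfl⟩
            intro B hBne hBo
            calc (1:ℝ) ≤ ∑ p : X₁ × X₂, (A ×ˢ B).indicator x p :=
                  hxF (A ×ˢ B) (hAne.prod hBne)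
                    (sOpen_odot_iff.2 (odotOpens_prod hAo hBo))
              _ = ∑ j, B.indicator z j := sum_indicator_prod' A B x
          have hLP2le : sLPcover S₂ ≤ ∑ j, z j := csInf_le (FeasSet_bddBelow _) hzfeas
          have hsum : ∑ i, A.indicator x₁ i = (∑ j, z j) / sLPcover S₂ := by
            have e1 : ∀ i, A.indicator x₁ i
                = (∑ j, A.indicator (fun i' => x (i', j)) i) / sLPcover S₂ := by
              intro i
              by_cases hi : i ∈ A
              · simp [hx₁def, Set.indicator_of_mem hi]
              · simp [Set.indicator_of_notMem hi]
            calc ∑ i, A.indicator x₁ i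
                = ∑ i, (∑ j, A.indicator (fun i' => x (i', j)) i) / sLPcover S₂ :=
                  Finset.sum_congr rfl fun i _ => e1 i
              _ = (∑ i, ∑ j, A.indicator (fun i' => x (i', j)) i) / sLPcover S₂ := by
                  rw [Finset.sum_div]
              _ = (∑ j, z j) / sLPcover S₂ := by rw [Finset.sum_comm]
          rw [hsum]
          exact (one_le_div hLP2pos).2 hLP2le
        have hLP1le : sLPcover S₁ ≤ ∑ i, x₁ i := csInf_le (FeasSet_bddBelow _) hfeas1
        have hval : ∑ i, x₁ i = (∑ p : X₁ × X₂, x p) / sLPcover S₂ := by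
          rw [Fintype.sum_prod_type, ← Finset.sum_div]
        rw [hval, le_div_iff₀ hLP2pos] at hLP1le
        exact hLP1le
    · -- S₂ has no nonempty open set
      have hodot : ¬ ∃ U : Set (X₁ × X₂), U.Nonempty ∧ sOpen (odot S₁ S₂) U := by
        rintro ⟨U, hUne, hUo⟩
        obtain ⟨F, hF, rfl⟩ := sOpen_odot_iff.1 hUo
        obtain ⟨u, hu⟩ := hUne
        obtain ⟨q, hq, huq⟩ := Set.mem_iUnion₂.1 hu
        exact h2 ⟨q.2, ⟨u.2, huq.2⟩, (hF q hq).2⟩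
      rw [sLPcover_eq_zero _ hodot, sLPcover_eq_zero _ h2, mul_zero]
  · -- S₁ has no nonempty open set
    have hodot : ¬ ∃ U : Set (X₁ × X₂), U.Nonempty ∧ sOpen (odot S₁ S₂) U := by
      rintro ⟨U, hUne, hUo⟩
      obtain ⟨F, hF, rfl⟩ := sOpen_odot_iff.1 hUo
      obtain ⟨u, hu⟩ := hUne
      obtain ⟨q, hq, huq⟩ := Set.mem_iUnion₂.1 hu
      exact h1 ⟨q.1, ⟨u.1, huq.1⟩, (hF q hq).1⟩
    rw [sLPcover_eq_zero _ hodot, sLPcover_eq_zero _ h1, zero_mul]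
end

section
/- Let 𝒪 be a union-closed family of subsets of a finite set [n] (i.e., A, B ∈ 𝒪 implies A ∪ B ∈ 𝒪) with N = |𝒪| ≥ 2 distinct members. Then there exists an element i ∈ [n] that belongs to at least (N − 1)/log₂ N of the members of 𝒪. -/
open scoped BigOperators

/-- every union-closed family of `N ≥ 2` subsets of `[n]` has an element
contained in at least `(N − 1)/log₂ N` of its members. -/
theorem union_closed_frequent_element (n : ℕ) (𝒪 : Set (Set (Fin n)))
    (hUC : ∀ A ∈ 𝒪, ∀ B ∈ 𝒪, A ∪ B ∈ 𝒪) (hN : 2 ≤ 𝒪.ncard) :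
    ∃ i : Fin n, ((𝒪.ncard : ℝ) - 1) / Real.logb 2 (𝒪.ncard : ℝ) ≤
      ({B ∈ 𝒪 | i ∈ B}.ncard : ℝ) := by
  classical
  have hfin : 𝒪.Finite := Set.toFinite _
  set F : Finset (Set (Fin n)) := hfin.toFinset with hFdef
  have hmemF : ∀ {A : Set (Fin n)}, A ∈ F ↔ A ∈ 𝒪 := fun {A} => hfin.mem_toFinset
  have hNcard : 𝒪.ncard = F.card := by
    rw [← Set.ncard_coe_finset, hfin.coe_toFinset]
  set N := F.card with hNdef
  have hN2 : 2 ≤ N := hNcard ▸ hN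
  have hdeg : ∀ i : Fin n, {B ∈ 𝒪 | i ∈ B}.ncard = (F.filter fun B => i ∈ B).card := by
    intro i
    rw [← Set.ncard_coe_finset]
    congr 1
    ext B
    simp only [Finset.coe_filter, Set.mem_setOf_eq, hmemF]
  -- hitting sets
  set isHit : Finset (Fin n) → Prop :=
    fun H => ∀ A ∈ 𝒪, A.Nonempty → ∃ x ∈ H, x ∈ A with hisHit
  have hhit_univ : isHit Finset.univ := fun A _ hA =>
    ⟨hA.choose, Finset.mem_univ _, hA.choose_spec⟩
  obtain ⟨H, hHmem, hHmin⟩ := Finset.exists_min_image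
    ((Finset.univ : Finset (Finset (Fin n))).filter isHit) Finset.card
    ⟨Finset.univ, Finset.mem_filter.mpr ⟨Finset.mem_univ _, hhit_univ⟩⟩
  have hHhit : isHit H := (Finset.mem_filter.mp hHmem).2
  have hHmin' : ∀ H', isHit H' → H.card ≤ H'.card := fun H' h =>
    hHmin H' (Finset.mem_filter.mpr ⟨Finset.mem_univ _, h⟩)
  -- H is nonempty
  have hHne : H.Nonempty := by
    obtain ⟨A, hA, B, hB, hAB⟩ := Finset.one_lt_card.mp (by omega : 1 < F.card)
    have hex : ∃ A ∈ 𝒪, A.Nonempty := by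
      rcases eq_or_ne A ∅ with rfl | hAne
      · exact ⟨B, hmemF.mp hB, Set.nonempty_iff_ne_empty.mpr (Ne.symm hAB)⟩
      · exact ⟨A, hmemF.mp hA, Set.nonempty_iff_ne_empty.mpr hAne⟩
    obtain ⟨A, hA, hAne⟩ := hex
    obtain ⟨x, hx, _⟩ := hHhit A hA hAne
    exact ⟨x, hx⟩
  -- private sets
  have hpriv : ∀ x ∈ H, ∃ A ∈ 𝒪, A ∩ ↑H = {x} := by
    intro x hx
    by_contra hcon
    push_neg at hcon
    have hhit' : isHit (H.erase x) := by
      intro A hA hAne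
      obtain ⟨y, hyH, hyA⟩ := hHhit A hA hAne
      have hz : ∃ z, (z ∈ A ∩ ↑H) ∧ z ≠ x := by
        by_contra h2
        push_neg at h2
        apply hcon A hA
        apply Set.eq_singleton_iff_unique_mem.mpr
        constructor
        · by_cases hyx : y = x
          · exact ⟨hyx ▸ hyA, by exact_mod_cast hyx ▸ hyH⟩
          · exact absurd (h2 y ⟨hyA, by exact_mod_cast hyH⟩) hyx
        · exact fun z hz => h2 z hz
      obtain ⟨z, ⟨hzA, hzH⟩, hzx⟩ := hz
      exact ⟨z, Finset.mem_erase.mpr ⟨hzx, by exact_mod_cast hzH⟩, hzA⟩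
    have h1 := hHmin' _ hhit'
    have h2 := Finset.card_erase_of_mem hx
    have h3 : 0 < H.card := Finset.card_pos.mpr ⟨x, hx⟩
    omega
  have hpriv' : ∀ x : Fin n, ∃ A : Set (Fin n), x ∈ H → (A ∈ 𝒪 ∧ A ∩ ↑H = {x}) := by
    intro x
    by_cases hx : x ∈ H
    · obtain ⟨A, h1, h2⟩ := hpriv x hx
      exact ⟨A, fun _ => ⟨h1, h2⟩⟩
    · exact ⟨∅, fun h => absurd h hx⟩
  choose Ax hAx using hpriv'
  -- unions of private sets
  have hsupl : ∀ (T : Finset (Fin n)), T.Nonempty → T ⊆ H →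
      (T.sup Ax ∈ 𝒪 ∧ (T.sup Ax) ∩ ↑H = ↑T) := by
    intro T hT
    induction hT using Finset.Nonempty.cons_induction with
    | singleton a =>
      intro haH
      have ha : a ∈ H := haH (Finset.mem_singleton_self a)
      rw [Finset.sup_singleton]
      exact ⟨(hAx a ha).1, by rw [(hAx a ha).2, Finset.coe_singleton]⟩
    | cons a s h hs ih =>
      intro hsub
      have haH : a ∈ H := hsub (Finset.mem_cons_self a s)
      have hsH : s ⊆ H := (Finset.subset_cons h).trans hsub
      obtain ⟨h1, h2⟩ := ih hsH
      rw [Finset.sup_cons]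
      constructor
      · exact hUC _ (hAx a haH).1 _ h1
      · show (Ax a ∪ s.sup Ax) ∩ ↑H = _
        rw [Set.union_inter_distrib_right, (hAx a haH).2, h2, Finset.coe_cons,
          Set.insert_eq]
  have hlogpos : 0 < Real.logb 2 (N : ℝ) :=
    Real.logb_pos one_lt_two (by exact_mod_cast hN2.trans_lt' one_lt_two)
  by_cases hcase : 2 ^ H.card ≤ N
  · -- averaging case
    have hsum : N - 1 ≤ ∑ x ∈ H, (F.filter fun B => x ∈ B).card := by
      have h1 : ∑ x ∈ H, (F.filter fun B => x ∈ B).card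
          = ∑ B ∈ F, (H.filter fun x => x ∈ B).card := by
        simp only [Finset.card_filter]
        exact Finset.sum_comm
      rw [h1]
      have h2 : (F.filter fun B => B.Nonempty).card
          ≤ ∑ B ∈ F, (H.filter fun x => x ∈ B).card := by
        calc (F.filter fun B => B.Nonempty).card
            = ∑ _B ∈ F.filter (fun B => B.Nonempty), 1 := by
              rw [Finset.card_eq_sum_ones]
          _ ≤ ∑ B ∈ F.filter (fun B => B.Nonempty), (H.filter fun x => x ∈ B).card := by
              apply Finset.sum_le_sum
              intro B hB
              obtain ⟨hBF, hBne⟩ := Finset.mem_filter.mp hB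
              obtain ⟨x, hxH, hxB⟩ := hHhit B (hmemF.mp hBF) hBne
              exact Finset.card_pos.mpr ⟨x, Finset.mem_filter.mpr ⟨hxH, hxB⟩⟩
          _ ≤ ∑ B ∈ F, (H.filter fun x => x ∈ B).card :=
              Finset.sum_le_sum_of_subset (Finset.filter_subset _ _)
      have h3 : (F.filter fun B => ¬ B.Nonempty).card ≤ 1 := by
        apply Finset.card_le_one.mpr
        intro a ha b hb
        have ha' := (Finset.mem_filter.mp ha).2
        have hb' := (Finset.mem_filter.mp hb).2
        rw [Set.not_nonempty_iff_eq_empty] at ha' hb'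
        rw [ha', hb']
      have h4 := Finset.card_filter_add_card_filter_not
        (s := F) (p := fun B => B.Nonempty)
      omega
    obtain ⟨x, hxH, hmax⟩ := Finset.exists_max_image H
      (fun x => (F.filter fun B => x ∈ B).card) hHne
    have hb : ∑ y ∈ H, (F.filter fun B => y ∈ B).card
        ≤ H.card * (F.filter fun B => x ∈ B).card := by
      simpa [smul_eq_mul] using
        Finset.sum_le_card_nsmul H (fun y => (F.filter fun B => y ∈ B).card) _ hmax
    have key : N - 1 ≤ H.card * (F.filter fun B => x ∈ B).card := hsum.trans hb
    refine ⟨x, ?_⟩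
    rw [hdeg x, hNcard]
    have hlogN : (H.card : ℝ) ≤ Real.logb 2 (N : ℝ) := by
      have h5 : ((2 : ℝ) ^ H.card) ≤ (N : ℝ) := by exact_mod_cast hcase
      calc (H.card : ℝ) = Real.logb 2 ((2 : ℝ) ^ H.card) := by
            rw [Real.logb_pow, Real.logb_self_eq_one one_lt_two, mul_one]
        _ ≤ Real.logb 2 (N : ℝ) :=
            Real.logb_le_logb_of_le one_lt_two (pow_pos two_pos _) h5
    rw [div_le_iff₀ hlogpos]
    have hkeyR : (N : ℝ) - 1 ≤ (H.card : ℝ) * ((F.filter fun B => x ∈ B).card : ℝ) := by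
      have := (Nat.cast_le (α := ℝ)).mpr key
      push_cast at this
      have hN1 : (1 : ℝ) ≤ (N : ℝ) := by exact_mod_cast (by omega : 1 ≤ N)
      calc (N : ℝ) - 1 ≤ ((N - 1 : ℕ) : ℝ) := by
            rw [Nat.cast_sub (by omega : 1 ≤ N)]; norm_num
        _ ≤ _ := by exact_mod_cast key
    calc (N : ℝ) - 1 ≤ (H.card : ℝ) * ((F.filter fun B => x ∈ B).card : ℝ) := hkeyR
      _ ≤ Real.logb 2 (N : ℝ) * ((F.filter fun B => x ∈ B).card : ℝ) := by
          apply mul_le_mul_of_nonneg_right hlogN (by positivity)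
      _ = _ := mul_comm _ _
  · -- small case : N < 2 ^ |H|
    push_neg at hcase
    obtain ⟨x, hxH⟩ := hHne
    have h2le : 2 ≤ H.card := by
      by_contra hh
      push_neg at hh
      have : 2 ^ H.card ≤ 2 ^ 1 := Nat.pow_le_pow_right (by norm_num) (by omega)
      omega
    have hxnotT : ∀ T ⊆ H.erase x, x ∉ T := fun T hT hxT =>
      (Finset.mem_erase.mp (hT hxT)).1 rfl
    have hinsert : ∀ T ⊆ H.erase x, insert x T ⊆ H := by
      intro T hT y hy
      rcases Finset.mem_insert.mp hy with rfl | hy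
      · exact hxH
      · exact Finset.erase_subset _ _ (hT hy)
    have hinj : ((H.erase x).powerset).card ≤ (F.filter fun B => x ∈ B).card := by
      apply Finset.card_le_card_of_injOn (fun T => (insert x T).sup Ax)
      · intro T hT
        have hTsub : T ⊆ H.erase x := Finset.mem_powerset.mp hT
        obtain ⟨hmem, htrace⟩ := hsupl _ ⟨x, Finset.mem_insert_self x T⟩ (hinsert T hTsub)
        refine Finset.mem_filter.mpr ⟨hmemF.mpr hmem, ?_⟩
        have hx2 : (x : Fin n) ∈ ((insert x T).sup Ax) ∩ (↑H : Set (Fin n)) := by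
          rw [htrace]
          exact_mod_cast Finset.mem_insert_self x T
        exact hx2.1
      · intro T hT T' hT' heq
        rw [Finset.mem_coe, Finset.mem_powerset] at hT hT'
        change (insert x T).sup Ax = (insert x T').sup Ax at heq
        have e1 : (↑(insert x T) : Set (Fin n)) = ↑(insert x T') := by
          rw [← (hsupl _ ⟨x, Finset.mem_insert_self x T⟩ (hinsert T hT)).2,
            ← (hsupl _ ⟨x, Finset.mem_insert_self x T'⟩ (hinsert T' hT')).2, heq]
        have e2 : insert x T = insert x T' := Finset.coe_injective e1
        rw [← Finset.erase_insert (hxnotT T hT), ← Finset.erase_insert (hxnotT T' hT'), e2]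
    have hd2 : 2 ^ (H.card - 1) ≤ (F.filter fun B => x ∈ B).card := by
      rw [← Finset.card_erase_of_mem hxH, ← Finset.card_powerset]
      exact hinj
    have hdN : (F.filter fun B => x ∈ B).card ≤ N := Finset.card_filter_le F _
    -- nat inequality : N - 1 ≤ (|H| - 1) * 2^(|H|-1)
    have hnat : N - 1 ≤ (H.card - 1) * 2 ^ (H.card - 1) := by
      have hkey : 2 ^ H.card - 2 ≤ (H.card - 1) * 2 ^ (H.card - 1) := by
        have hpow : 2 * 2 ^ (H.card - 1) = 2 ^ H.card := by
          rw [← pow_succ']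
          congr 1
          omega
        rcases Nat.lt_or_ge H.card 3 with hlt | hge
        · have hc2 : H.card = 2 := by omega
          rw [hc2]
          norm_num
        · have : 2 * 2 ^ (H.card - 1) ≤ (H.card - 1) * 2 ^ (H.card - 1) :=
            Nat.mul_le_mul_right _ (by omega)
          omega
      omega
    refine ⟨x, ?_⟩
    rw [hdeg x, hNcard]
    have hlogN : ((H.card : ℝ) - 1) ≤ Real.logb 2 (N : ℝ) := by
      have hNpow : ((2 : ℝ) ^ (H.card - 1)) ≤ (N : ℝ) := by
        exact_mod_cast hd2.trans hdN
      calc ((H.card : ℝ) - 1) = Real.logb 2 ((2 : ℝ) ^ (H.card - 1)) := by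
            rw [Real.logb_pow, Real.logb_self_eq_one one_lt_two, mul_one,
              Nat.cast_sub (by omega : 1 ≤ H.card), Nat.cast_one]
        _ ≤ Real.logb 2 (N : ℝ) :=
            Real.logb_le_logb_of_le one_lt_two (pow_pos two_pos _) hNpow
    rw [div_le_iff₀ hlogpos]
    have hnatR : (N : ℝ) - 1 ≤ ((H.card : ℝ) - 1) * (2 : ℝ) ^ (H.card - 1) := by
      calc (N : ℝ) - 1 ≤ ((N - 1 : ℕ) : ℝ) := by
            rw [Nat.cast_sub (by omega : 1 ≤ N)]; norm_num
        _ ≤ (((H.card - 1) * 2 ^ (H.card - 1) : ℕ) : ℝ) := by exact_mod_cast hnat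
        _ = ((H.card : ℝ) - 1) * (2 : ℝ) ^ (H.card - 1) := by
            push_cast [Nat.cast_sub (by omega : 1 ≤ H.card)]
            ring
    calc (N : ℝ) - 1 ≤ ((H.card : ℝ) - 1) * (2 : ℝ) ^ (H.card - 1) := hnatR
      _ ≤ Real.logb 2 (N : ℝ) * ((F.filter fun B => x ∈ B).card : ℝ) := by
          apply mul_le_mul hlogN (by exact_mod_cast hd2) (by positivity) hlogpos.le
      _ = _ := mul_comm _ _
end
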